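/- arXiv:math/9210216 — 5 statements merged into one kernel-verified Lean document; each statement's English description precedes it below -/
import Mathlib

section
/- For any compact metric space X, the limit xt(X) := lim_{q→∞} xt_q(X) exists and satisfies (1/2)·diam(X) ≤ xt(X) ≤ diam(X). -/
open Metric

/-- Average pairwise distance of a `q`-tuple. -/
noncomputable def avgDist {X : Type*} [MetricSpace X] {q : ℕ} (x : Fin q → X) : ℝ :=
  (∑ i : Fin q, ∑ j : Fin q, if i < j then dist (x i) (x j) else 0) / (q.choose 2)

/-- The `q`-extent of a metric space: supremum of average pairwise distances. -/
noncomputable def extent (X : Type*) [MetricSpace X] (q : ℕ) : ℝ :=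
  sSup (Set.range (fun x : Fin q → X => avgDist x))

/-!
Write `avgDist x = (∑ i, ∑ j, dist (x i) (x j)) / (q (q - 1))`. Deleting the `k`-th point of a
`(q + 1)`-tuple and averaging over `k` gives back `avgDist x`, so some deletion does not decrease
it and `extent X (q + 1) ≤ extent X q` for `q ≥ 2`. Every average is at most `diam X`, and
placing `⌊q / 2⌋` points at `a` and the rest at `b` gives an average of at least `dist a b / 2`. The
sequence is therefore eventually non-increasing and bounded below by `diam X / 2`.
-/

section

variable {X : Type*} [MetricSpace X] {q : ℕ}

noncomputable def sumDist (x : Fin q → X) : ℝ :=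
  ∑ i, ∑ j, dist (x i) (x j)

lemma sum_upper_mul_two_eq_sumDist (x : Fin q → X) :
    (∑ i, ∑ j, if i < j then dist (x i) (x j) else 0) * 2 = sumDist x := by
  have hlower : (∑ i, ∑ j, if i < j then dist (x i) (x j) else 0)
      = ∑ i, ∑ j, if j < i then dist (x i) (x j) else 0 := by
    rw [Finset.sum_comm]
    simp_rw [dist_comm]
  rw [mul_two]
  nth_rewrite 2 [hlower]
  simp only [sumDist, ← Finset.sum_add_distrib]
  refine Finset.sum_congr rfl fun i _ => Finset.sum_congr rfl fun j _ => ?_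
  rcases lt_trichotomy i j with h | rfl | h
  · simp [h, h.not_gt]
  · simp
  · simp [h, h.not_gt]

-- Also true for `q < 2`, where both denominators vanish.
lemma avgDist_eq_sumDist_div (x : Fin q → X) :
    avgDist x = sumDist x / (q * (q - 1)) := by
  rw [avgDist, Nat.cast_choose_two, div_div_eq_mul_div, sum_upper_mul_two_eq_sumDist]

lemma avgDist_nonneg (x : Fin q → X) : 0 ≤ avgDist x := by
  unfold avgDist; positivity

lemma sumDist_comp_succAbove (x : Fin (q + 1) → X) (k : Fin (q + 1)) :
    sumDist (x ∘ k.succAbove) = sumDist x - 2 * ∑ j, dist (x k) (x j) := by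
  have hdel (f : Fin (q + 1) → ℝ) : ∑ i : Fin q, f (k.succAbove i) = ∑ i, f i - f k := by
    rw [Fin.sum_univ_succAbove f k]; ring
  simp only [sumDist, Function.comp_apply]
  rw [hdel (fun i => ∑ j : Fin q, dist (x i) (x (k.succAbove j)))]
  simp only [fun i => hdel (fun j => dist (x i) (x j)), Finset.sum_sub_distrib, dist_self]
  simp_rw [dist_comm _ (x k)]
  ring

lemma sum_sumDist_comp_succAbove (x : Fin (q + 1) → X) :
    ∑ k : Fin (q + 1), sumDist (x ∘ k.succAbove) = (q - 1) * sumDist x := by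
  simp only [sumDist_comp_succAbove, Finset.sum_sub_distrib, ← Finset.mul_sum, Finset.sum_const,
    Finset.card_univ, Fintype.card_fin, nsmul_eq_mul]
  rw [← sumDist]
  push_cast
  ring

lemma sum_avgDist_comp_succAbove (hq : 2 ≤ q) (x : Fin (q + 1) → X) :
    ∑ k : Fin (q + 1), avgDist (x ∘ k.succAbove) = (q + 1) * avgDist x := by
  have hq' : (2 : ℝ) ≤ q := by exact_mod_cast hq
  simp only [avgDist_eq_sumDist_div, ← Finset.sum_div, sum_sumDist_comp_succAbove]
  have hq1 : (q : ℝ) - 1 ≠ 0 := by linarith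
  rw [mul_comm, mul_div_mul_right _ _ hq1]
  push_cast
  rw [add_sub_cancel_right]
  field_simp

lemma exists_avgDist_le_avgDist_comp_succAbove (hq : 2 ≤ q) (x : Fin (q + 1) → X) :
    ∃ k : Fin (q + 1), avgDist x ≤ avgDist (x ∘ k.succAbove) := by
  have hsum :
      ∑ _k : Fin (q + 1), avgDist x ≤ ∑ k : Fin (q + 1), avgDist (x ∘ k.succAbove) := by
    simp [sum_avgDist_comp_succAbove hq]
  obtain ⟨k, -, hk⟩ := Finset.exists_le_of_sum_le Finset.univ_nonempty hsum
  exact ⟨k, hk⟩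

lemma sumDist_le [BoundedSpace X] (x : Fin q → X) :
    sumDist x ≤ q * (q - 1) * diam (Set.univ : Set X) := by
  have hrow (i : Fin q) : ∑ j, dist (x i) (x j) ≤ (q - 1) * diam (Set.univ : Set X) := by
    classical
    rw [← Finset.sum_erase _ (f := fun j => dist (x i) (x j)) (dist_self (x i))]
    refine (Finset.sum_le_card_nsmul _ _ _ fun j _ =>
      dist_le_diam_of_mem BoundedSpace.bounded_univ (Set.mem_univ _) (Set.mem_univ _)).trans_eq ?_
    rw [Finset.card_erase_of_mem (Finset.mem_univ i), nsmul_eq_mul, Finset.card_univ,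
      Fintype.card_fin, Nat.cast_pred i.pos]
  calc sumDist x ≤ ∑ _i : Fin q, (q - 1) * diam (Set.univ : Set X) :=
        Finset.sum_le_sum fun i _ => hrow i
    _ = q * (q - 1) * diam (Set.univ : Set X) := by simp [mul_assoc]

lemma avgDist_le_diam [BoundedSpace X] (x : Fin q → X) :
    avgDist x ≤ diam (Set.univ : Set X) := by
  rw [avgDist_eq_sumDist_div]
  rcases le_or_gt ((q : ℝ) * (q - 1)) 0 with h | h
  · exact (div_nonpos_of_nonneg_of_nonpos (Finset.sum_nonneg fun _ _ =>
      Finset.sum_nonneg fun _ _ => dist_nonneg) h).trans diam_nonneg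
  · rw [div_le_iff₀ h, mul_comm]
    exact sumDist_le x

lemma sumDist_append_const (a b : X) (m n : ℕ) :
    sumDist (Fin.append (fun _ : Fin m => a) (fun _ : Fin n => b)) = 2 * m * n * dist a b := by
  simp only [sumDist, Fin.sum_univ_add, Fin.append_left, Fin.append_right, Finset.sum_const,
    Finset.card_univ, Fintype.card_fin, nsmul_eq_mul, dist_self, mul_zero, zero_add, add_zero,
    dist_comm b a]
  ring

lemma exists_half_dist_le_avgDist (a b : X) (hq : 2 ≤ q) :
    ∃ x : Fin q → X, dist a b / 2 ≤ avgDist x := by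
  obtain ⟨m, n, rfl, hmn, hnm⟩ : ∃ m n, q = m + n ∧ m ≤ n ∧ n ≤ m + 1 :=
    ⟨q / 2, q - q / 2, by omega, by omega, by omega⟩
  refine ⟨Fin.append (fun _ : Fin m => a) (fun _ : Fin n => b), ?_⟩
  have hq' : (2 : ℝ) ≤ m + n := by exact_mod_cast hq
  have hmn' : (m : ℝ) ≤ n := by exact_mod_cast hmn
  have hnm' : (n : ℝ) ≤ m + 1 := by exact_mod_cast hnm
  have hbalanced : ((m : ℝ) + n) * (m + n - 1) ≤ 4 * m * n := by
    nlinarith [mul_nonneg (sub_nonneg.2 hmn') (sub_nonneg.2 hnm')]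
  rw [avgDist_eq_sumDist_div, sumDist_append_const, le_div_iff₀ (by push_cast; nlinarith)]
  push_cast
  nlinarith [dist_nonneg (x := a) (y := b)]

lemma extent_nonneg (q : ℕ) : 0 ≤ extent X q :=
  Real.sSup_nonneg (Set.forall_mem_range.2 avgDist_nonneg)

section Bounded

variable [BoundedSpace X]

lemma bddAbove_range_avgDist (q : ℕ) : BddAbove (Set.range (avgDist : (Fin q → X) → ℝ)) :=
  ⟨diam Set.univ, Set.forall_mem_range.2 avgDist_le_diam⟩

lemma extent_le_diam (q : ℕ) : extent X q ≤ diam (Set.univ : Set X) :=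
  Real.sSup_le (Set.forall_mem_range.2 avgDist_le_diam) diam_nonneg

lemma extent_succ_le (hq : 2 ≤ q) : extent X (q + 1) ≤ extent X q := by
  refine Real.sSup_le (Set.forall_mem_range.2 fun x => ?_) (extent_nonneg q)
  obtain ⟨k, hk⟩ := exists_avgDist_le_avgDist_comp_succAbove hq x
  exact hk.trans (le_csSup (bddAbove_range_avgDist q) ⟨_, rfl⟩)

lemma half_diam_le_extent (hq : 2 ≤ q) : diam (Set.univ : Set X) / 2 ≤ extent X q := by
  have hdist (a b : X) : dist a b ≤ 2 * extent X q := by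
    obtain ⟨x, hx⟩ := exists_half_dist_le_avgDist a b hq
    have hx_le : avgDist x ≤ extent X q := le_csSup (bddAbove_range_avgDist q) ⟨x, rfl⟩
    linarith
  have hdiam : diam (Set.univ : Set X) ≤ 2 * extent X q :=
    diam_le_of_forall_dist_le (by linarith [extent_nonneg (X := X) q]) fun a _ b _ => hdist a b
  linarith

end Bounded

end

open Filter Topology in
theorem extent_tendsto_general (X : Type*) [MetricSpace X] [CompactSpace X] :
    ∃ l : ℝ, Filter.Tendsto (fun q : ℕ => extent X q) Filter.atTop (nhds l) ∧
      Metric.diam (Set.univ : Set X) / 2 ≤ l ∧ l ≤ Metric.diam (Set.univ : Set X) := by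
  have hanti : Antitone fun n => extent X (n + 2) :=
    antitone_nat_of_succ_le fun n => extent_succ_le (by omega)
  have hbdd : BddBelow (Set.range fun n => extent X (n + 2)) :=
    ⟨_, Set.forall_mem_range.2 fun n => half_diam_le_extent (by omega)⟩
  obtain ⟨l, hl⟩ : ∃ l, Tendsto (fun q => extent X q) atTop (𝓝 l) :=
    ⟨_, (tendsto_add_atTop_iff_nat 2).1 (tendsto_atTop_ciInf hanti hbdd)⟩
  refine ⟨l, hl, ge_of_tendsto hl ?_, le_of_tendsto' hl extent_le_diam⟩
  exact eventually_atTop.2 ⟨2, fun q hq => half_diam_le_extent hq⟩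

theorem extent_tendsto (X : Type*) [MetricSpace X] [CompactSpace X] [Nonempty X] :
    ∃ l : ℝ, Filter.Tendsto (fun q : ℕ => extent X q) Filter.atTop (nhds l) ∧
      Metric.diam (Set.univ : Set X) / 2 ≤ l ∧ l ≤ Metric.diam (Set.univ : Set X) :=
  extent_tendsto_general X
end

section
/- For the closed interval [0, L] and any even integer q = 2m ≥ 2, the q-extent is xt_q([0,L]) = L · m² / C(2m,2) = L·m/(2m−1), realized by placing m points at 0 and m points at L. -/
open Metric

private lemma gauss_sum (m : ℕ) : ∑ j ∈ Finset.range m, (2 * (j:ℝ) + 1) = (m:ℝ)^2 := by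
  induction m with
  | zero => simp
  | succ n ih =>
    rw [Finset.sum_range_succ, ih]
    push_cast
    ring

private lemma key_range (L : ℝ) (m : ℕ) :
    ∑ k : Fin (2*m), (if (k:ℕ) < m then 0 else (2*((k:ℕ):ℝ)+1-((2*m:ℕ):ℝ)) * L)
      = L * (m:ℝ)^2 := by
  rw [Fin.sum_univ_eq_sum_range (fun k => if k < m then 0 else (2*(k:ℝ)+1-((2*m:ℕ):ℝ)) * L)]
  have hc : (((2*m:ℕ)):ℝ) = 2*(m:ℝ) := by push_cast; ring
  simp only [hc]
  rw [show 2*m = m + m by ring, Finset.sum_range_add]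
  have h1 : ∑ x ∈ Finset.range m,
      (if x < m then 0 else (2*(x:ℝ)+1-(2*(m:ℝ))) * L) = 0 := by
    apply Finset.sum_eq_zero
    intro x hx
    rw [if_pos (Finset.mem_range.1 hx)]
  have h2 : ∑ x ∈ Finset.range m,
      (if m + x < m then 0 else (2*((m+x:ℕ):ℝ)+1-(2*(m:ℝ))) * L)
      = ∑ x ∈ Finset.range m, (2*(x:ℝ)+1) * L := by
    apply Finset.sum_congr rfl
    intro x _
    rw [if_neg (by omega)]
    push_cast
    ring
  rw [h1, h2, zero_add, ← Finset.sum_mul, gauss_sum]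
  ring

private lemma ident (q : ℕ) (y : Fin q → ℝ) :
    ∑ i : Fin q, ∑ j : Fin q, (if i < j then y j - y i else 0)
      = ∑ k : Fin q, (2*((k:ℕ):ℝ)+1-((q:ℕ):ℝ)) * y k := by
  have h1 : ∀ i j : Fin q, (if i < j then y j - y i else 0)
      = (if i < j then y j else 0) - (if i < j then y i else 0) := by
    intro i j; split <;> simp
  simp only [h1, Finset.sum_sub_distrib]
  have hA : ∑ i : Fin q, ∑ j : Fin q, (if i < j then y j else 0)
      = ∑ k : Fin q, ((k:ℕ):ℝ) * y k := by
    rw [Finset.sum_comm]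
    refine Finset.sum_congr rfl fun j _ => ?_
    have : ∀ i : Fin q, (if i < j then y j else 0) = (if i ∈ Finset.Iio j then y j else 0) := by
      intro i; simp [Finset.mem_Iio]
    simp only [this, Finset.sum_ite_mem, Finset.univ_inter, Finset.sum_const, Fin.card_Iio,
      nsmul_eq_mul]
  have hB : ∑ i : Fin q, ∑ j : Fin q, (if i < j then y i else 0)
      = ∑ k : Fin q, ((q - 1 - (k:ℕ) : ℕ):ℝ) * y k := by
    refine Finset.sum_congr rfl fun i _ => ?_
    have : ∀ j : Fin q, (if i < j then y i else 0) = (if j ∈ Finset.Ioi i then y i else 0) := by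
      intro j; simp [Finset.mem_Ioi]
    simp only [this, Finset.sum_ite_mem, Finset.univ_inter, Finset.sum_const, Fin.card_Ioi,
      nsmul_eq_mul]
  rw [hA, hB, ← Finset.sum_sub_distrib]
  refine Finset.sum_congr rfl fun k _ => ?_
  have hk : (k:ℕ) < q := k.isLt
  rw [Nat.sub_sub, Nat.cast_sub (by omega)]
  push_cast
  ring

private lemma full_eq_twice (q : ℕ) (F : Fin q → Fin q → ℝ) (hs : ∀ i j, F i j = F j i)
    (hd : ∀ i, F i i = 0) :
    ∑ i : Fin q, ∑ j : Fin q, F i j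
      = 2 * ∑ i : Fin q, ∑ j : Fin q, (if i < j then F i j else 0) := by
  have h : ∀ i j : Fin q, F i j
      = (if i < j then F i j else 0) + (if j < i then F i j else 0) := by
    intro i j
    rcases lt_trichotomy i j with h|h|h
    · simp [h, not_lt.2 h.le]
    · simp [h, hd]
    · simp [h, not_lt.2 h.le]
  calc ∑ i : Fin q, ∑ j : Fin q, F i j
      = ∑ i : Fin q, ∑ j : Fin q,
          ((if i < j then F i j else 0) + (if j < i then F i j else 0)) := by
        exact Finset.sum_congr rfl fun i _ => Finset.sum_congr rfl fun j _ => h i j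
    _ = (∑ i : Fin q, ∑ j : Fin q, (if i < j then F i j else 0))
        + ∑ i : Fin q, ∑ j : Fin q, (if j < i then F i j else 0) := by
        simp [Finset.sum_add_distrib]
    _ = 2 * ∑ i : Fin q, ∑ j : Fin q, (if i < j then F i j else 0) := by
        rw [two_mul]
        congr 1
        rw [Finset.sum_comm]
        exact Finset.sum_congr rfl fun a _ => Finset.sum_congr rfl fun b _ => by rw [hs]

private lemma full_perm (q : ℕ) (f : Fin q → ℝ) (σ : Equiv.Perm (Fin q)) :
    ∑ i : Fin q, ∑ j : Fin q, |f (σ i) - f (σ j)| = ∑ i : Fin q, ∑ j : Fin q, |f i - f j| := by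
  have h1 : ∀ i : Fin q, ∑ j : Fin q, |f (σ i) - f (σ j)| = ∑ j : Fin q, |f (σ i) - f j| :=
    fun i => Equiv.sum_comp σ (fun j => |f (σ i) - f j|)
  simp only [h1]
  exact Equiv.sum_comp σ (fun i => ∑ j : Fin q, |f i - f j|)

private lemma coeff_sum_le (L : ℝ) (m : ℕ) (y : Fin (2*m) → ℝ)
    (h0 : ∀ k, 0 ≤ y k) (h1 : ∀ k, y k ≤ L) :
    ∑ k : Fin (2*m), (2*((k:ℕ):ℝ)+1-((2*m:ℕ):ℝ)) * y k ≤ L * (m:ℝ)^2 := by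
  rw [← key_range L m]
  apply Finset.sum_le_sum
  intro k _
  by_cases hk : (k:ℕ) < m
  · rw [if_pos hk]
    have hc : 2*((k:ℕ):ℝ)+1-((2*m:ℕ):ℝ) ≤ 0 := by
      have : ((k:ℕ):ℝ) + 1 ≤ (m:ℝ) := by exact_mod_cast hk
      push_cast
      linarith
    exact mul_nonpos_of_nonpos_of_nonneg hc (h0 k)
  · rw [if_neg hk]
    have hc : 0 ≤ 2*((k:ℕ):ℝ)+1-((2*m:ℕ):ℝ) := by
      have : (m:ℝ) ≤ ((k:ℕ):ℝ) := by exact_mod_cast not_lt.1 hk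
      push_cast
      linarith
    exact mul_le_mul_of_nonneg_left (h1 k) hc

private lemma sum_pair_le (L : ℝ) (m : ℕ) (x : Fin (2*m) → Set.Icc (0:ℝ) L) :
    ∑ i : Fin (2*m), ∑ j : Fin (2*m), (if i < j then dist (x i) (x j) else 0)
      ≤ L * (m:ℝ)^2 := by
  obtain ⟨σ, hmono⟩ : ∃ σ : Equiv.Perm (Fin (2*m)),
      Monotone (fun i => ((x (σ i) : ℝ))) :=
    ⟨Tuple.sort (fun i => ((x i : ℝ))),
      fun a b hab => Tuple.monotone_sort (fun i => ((x i : ℝ))) hab⟩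
  have hhalf := full_eq_twice (2*m) (fun i j => |(x i : ℝ) - (x j : ℝ)|)
    (fun i j => abs_sub_comm _ _) (fun i => by simp)
  have hhalf' := full_eq_twice (2*m) (fun i j => |(x (σ i) : ℝ) - (x (σ j) : ℝ)|)
    (fun i j => abs_sub_comm _ _) (fun i => by simp)
  have hperm := full_perm (2*m) (fun i => ((x i : ℝ))) σ
  have hS : (∑ i : Fin (2*m), ∑ j : Fin (2*m),
        if i < j then |(x i : ℝ) - (x j : ℝ)| else 0)
      = ∑ i : Fin (2*m), ∑ j : Fin (2*m),
        if i < j then |(x (σ i) : ℝ) - (x (σ j) : ℝ)| else 0 := by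
    apply mul_left_cancel₀ (two_ne_zero (α := ℝ))
    rw [← hhalf, ← hhalf']
    exact hperm.symm
  calc ∑ i : Fin (2*m), ∑ j : Fin (2*m), (if i < j then dist (x i) (x j) else 0)
      = ∑ i : Fin (2*m), ∑ j : Fin (2*m),
          (if i < j then |(x i : ℝ) - (x j : ℝ)| else 0) := by
        refine Finset.sum_congr rfl fun i _ => Finset.sum_congr rfl fun j _ => ?_
        rw [Subtype.dist_eq, Real.dist_eq]
    _ = ∑ i : Fin (2*m), ∑ j : Fin (2*m),
          (if i < j then |(x (σ i) : ℝ) - (x (σ j) : ℝ)| else 0) := hS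
    _ = ∑ i : Fin (2*m), ∑ j : Fin (2*m),
          (if i < j then ((x (σ j) : ℝ) - (x (σ i) : ℝ)) else 0) := by
        refine Finset.sum_congr rfl fun i _ => Finset.sum_congr rfl fun j _ => ?_
        split_ifs with hij
        · rw [abs_sub_comm]
          exact abs_of_nonneg (sub_nonneg.2 (hmono hij.le))
        · rfl
    _ = ∑ k : Fin (2*m), (2*((k:ℕ):ℝ)+1-((2*m:ℕ):ℝ)) * ((x (σ k) : ℝ)) :=
        ident (2*m) (fun i => ((x (σ i) : ℝ)))
    _ ≤ L * (m:ℝ)^2 :=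
        coeff_sum_le L m _ (fun k => (x (σ k)).2.1) (fun k => (x (σ k)).2.2)

private lemma witness_sum (L : ℝ) (hL : 0 ≤ L) (m : ℕ) :
    ∃ x : Fin (2*m) → Set.Icc (0:ℝ) L,
      ∑ i : Fin (2*m), ∑ j : Fin (2*m), (if i < j then dist (x i) (x j) else 0)
        = L * (m:ℝ)^2 := by
  refine ⟨fun k => if (k:ℕ) < m then ⟨0, le_refl 0, hL⟩ else ⟨L, hL, le_refl L⟩, ?_⟩
  set x : Fin (2*m) → Set.Icc (0:ℝ) L :=
    fun k => if (k:ℕ) < m then ⟨0, le_refl 0, hL⟩ else ⟨L, hL, le_refl L⟩ with hx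
  set y : Fin (2*m) → ℝ := fun k => if (k:ℕ) < m then 0 else L with hy
  have hxy : ∀ k, (x k : ℝ) = y k := by
    intro k
    simp only [hx, hy]
    split_ifs <;> rfl
  have hmono : Monotone y := by
    intro a b hab
    have hab' : (a:ℕ) ≤ (b:ℕ) := hab
    by_cases hb : (b:ℕ) < m
    · simp only [hy]
      rw [if_pos (by omega : (a:ℕ) < m), if_pos hb]
    · simp only [hy, if_neg hb]
      split_ifs
      · exact hL
      · exact le_refl L
  have hdist : ∀ i j : Fin (2*m), dist (x i) (x j) = |y i - y j| := fun i j => by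
    rw [Subtype.dist_eq, Real.dist_eq, hxy, hxy]
  calc ∑ i : Fin (2*m), ∑ j : Fin (2*m), (if i < j then dist (x i) (x j) else 0)
      = ∑ i : Fin (2*m), ∑ j : Fin (2*m), (if i < j then y j - y i else 0) := by
        refine Finset.sum_congr rfl fun i _ => Finset.sum_congr rfl fun j _ => ?_
        split_ifs with hij
        · rw [hdist, abs_sub_comm, abs_of_nonneg (sub_nonneg.2 (hmono hij.le))]
        · rfl
    _ = ∑ k : Fin (2*m), (2*((k:ℕ):ℝ)+1-((2*m:ℕ):ℝ)) * y k := ident (2*m) y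
    _ = L * (m:ℝ)^2 := by
        rw [← key_range L m]
        refine Finset.sum_congr rfl fun k _ => ?_
        simp only [hy, mul_ite, mul_zero]

theorem extent_Icc_even (L : ℝ) (hL : 0 < L) (m : ℕ) (hm : 1 ≤ m) :
    extent (Set.Icc (0 : ℝ) L) (2 * m) = L * (m : ℝ) ^ 2 / ((2 * m).choose 2) ∧
    extent (Set.Icc (0 : ℝ) L) (2 * m) = L * (m : ℝ) / (2 * m - 1) := by
  have hCnat : (2*m).choose 2 = m * (2*m - 1) := by
    rw [Nat.choose_two_right, show 2*m*(2*m-1) = 2*(m*(2*m-1)) by ring]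
    exact Nat.mul_div_cancel_left _ (by norm_num)
  have hCpos : (0:ℝ) < ((2*m).choose 2 : ℝ) := by
    have : 0 < (2*m).choose 2 := Nat.choose_pos (by omega)
    exact_mod_cast this
  have hfirst : extent (Set.Icc (0 : ℝ) L) (2 * m) = L * (m : ℝ) ^ 2 / ((2 * m).choose 2) := by
    apply IsGreatest.csSup_eq
    constructor
    · obtain ⟨x, hx⟩ := witness_sum L hL.le m
      exact ⟨x, by simp only [avgDist]; rw [hx]⟩
    · rintro r ⟨x, rfl⟩
      simp only [avgDist]
      exact (div_le_div_iff_of_pos_right hCpos).mpr (sum_pair_le L m x)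
  refine ⟨hfirst, hfirst.trans ?_⟩
  have hC : (((2*m).choose 2 : ℕ) : ℝ) = (m:ℝ) * (2*(m:ℝ) - 1) := by
    rw [hCnat]
    push_cast [Nat.cast_sub (by omega : 1 ≤ 2*m)]
    ring
  have hm1 : (1:ℝ) ≤ (m:ℝ) := by exact_mod_cast hm
  rw [hC, div_eq_div_iff (by nlinarith) (by linarith)]
  ring
end

section
/- For the closed interval [0, L] and any odd integer q = 2m+1 ≥ 3, the q-extent is xt_q([0,L]) = L · m(m+1) / C(2m+1,2) = L·(m+1)/(2m+1), realized by placing m points at one endpoint and m+1 at the other. -/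
/-!
If `a` and `b` carry the smallest and the largest of `n` points on a line, every other point lies
between them, so the pairs involving `a` or `b` contribute exactly `(n - 1) (x b - x a)`.
Removing both and inducting bounds the sum of all pairwise distances of `n` points of `[u, v]` by
`⌊n / 2⌋ ⌈n / 2⌉ (v - u)`, which is attained by putting `⌊n / 2⌋` points at `u` and the others
at `v`. For `n = 2m + 1` this is `m (m + 1) (v - u)`.
-/

open Metric

open Finset

noncomputable def sumAbsSub {ι : Type*} (s : Finset ι) (x : ι → ℝ) : ℝ :=
  ∑ i ∈ s, ∑ j ∈ s, |x i - x j|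

section sumAbsSub

variable {ι : Type*} {s t : Finset ι} {x : ι → ℝ}

theorem sumAbsSub_eq_zero_of_card_le_one (hs : #s ≤ 1) : sumAbsSub s x = 0 :=
  sum_eq_zero fun i hi => sum_eq_zero fun j hj => by
    rw [card_le_one.1 hs i hi j hj, sub_self, abs_zero]

theorem sumAbsSub_insert [DecidableEq ι] {a : ι} (ha : a ∉ s) :
    sumAbsSub (insert a s) x = sumAbsSub s x + 2 * ∑ j ∈ s, |x a - x j| := by
  simp only [sumAbsSub, sum_insert ha, sub_self, abs_zero, zero_add, sum_add_distrib,
    abs_sub_comm (x _) (x a)]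
  ring

theorem sumAbsSub_insert_insert [DecidableEq ι] {a b : ι} (ha : a ∉ insert b t) (hb : b ∉ t)
    (hmin : ∀ j ∈ insert b t, x a ≤ x j) (hmax : ∀ j ∈ t, x j ≤ x b) :
    sumAbsSub (insert a (insert b t)) x = sumAbsSub t x + 2 * (#t + 1) * (x b - x a) := by
  have hab : |x a - x b| = x b - x a := by
    rw [abs_sub_comm]; exact abs_of_nonneg (sub_nonneg.2 (hmin b (mem_insert_self b t)))
  have hat : ∑ j ∈ t, |x a - x j| = ∑ j ∈ t, (x j - x a) := sum_congr rfl fun j hj => by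
    rw [abs_sub_comm]; exact abs_of_nonneg (sub_nonneg.2 (hmin j (mem_insert_of_mem hj)))
  have hbt : ∑ j ∈ t, |x b - x j| = ∑ j ∈ t, (x b - x j) :=
    sum_congr rfl fun j hj => abs_of_nonneg (sub_nonneg.2 (hmax j hj))
  rw [sumAbsSub_insert ha, sumAbsSub_insert hb, sum_insert hb, hab, hat, hbt]
  simp only [sum_sub_distrib, sum_const, nsmul_eq_mul]
  ring

theorem exists_eq_insert_insert_of_two_le_card {α : Type*} [DecidableEq ι] [LinearOrder α]
    (hs : 2 ≤ #s) (f : ι → α) :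
    ∃ a b t, s = insert a (insert b t) ∧ a ∉ insert b t ∧ b ∉ t ∧
      (∀ j ∈ insert b t, f a ≤ f j) ∧ ∀ j ∈ t, f j ≤ f b := by
  obtain ⟨a, ha, hmin⟩ := s.exists_min_image f (card_pos.1 (by omega))
  obtain ⟨b, hb, hmax⟩ := (s.erase a).exists_max_image f
    (card_pos.1 (by rw [card_erase_of_mem ha]; omega))
  refine ⟨a, b, (s.erase a).erase b, ?_, ?_, notMem_erase b _, ?_, ?_⟩
  · rw [insert_erase hb, insert_erase ha]
  · rw [insert_erase hb]; exact notMem_erase a s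
  · rw [insert_erase hb]; exact fun j hj => hmin j (mem_of_mem_erase hj)
  · exact fun j hj => hmax j (mem_of_mem_erase hj)

theorem Nat.add_two_div_two_mul_add_three_div_two (k : ℕ) :
    (k + 2) / 2 * ((k + 3) / 2) = k / 2 * ((k + 1) / 2) + (k + 1) := by
  rw [show (k + 2) / 2 = k / 2 + 1 by omega, show (k + 3) / 2 = (k + 1) / 2 + 1 by omega]
  have hhalves : k / 2 + (k + 1) / 2 = k := by omega
  nlinarith

theorem sumAbsSub_le {u v : ℝ} (hx : ∀ i ∈ s, x i ∈ Set.Icc u v) :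
    sumAbsSub s x ≤ 2 * ((#s / 2 * ((#s + 1) / 2) : ℕ) : ℝ) * (v - u) := by
  classical
  induction hn : #s using Nat.strong_induction_on generalizing s with
  | _ n ih =>
  rcases lt_or_ge n 2 with hn2 | hn2
  · rw [sumAbsSub_eq_zero_of_card_le_one (by omega), show n / 2 = 0 by omega]
    simp
  obtain ⟨k, rfl⟩ : ∃ k, n = k + 2 := ⟨n - 2, by omega⟩
  obtain ⟨a, b, t, rfl, ha, hb, hmin, hmax⟩ := exists_eq_insert_insert_of_two_le_card (hn ▸ hn2) x
  have hk : #t = k := by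
    rw [card_insert_of_notMem ha, card_insert_of_notMem hb] at hn; omega
  have hspread : x b - x a ≤ v - u := by
    have hxa := hx a (mem_insert_self _ _)
    have hxb := hx b (mem_insert_of_mem (mem_insert_self _ _))
    linarith [hxa.1, hxb.2]
  have ht := ih k (by omega) (fun i hi => hx i (mem_insert_of_mem (mem_insert_of_mem hi))) hk
  rw [sumAbsSub_insert_insert ha hb hmin hmax, hk, show k + 2 + 1 = k + 3 by ring,
    Nat.add_two_div_two_mul_add_three_div_two]
  push_cast at ht ⊢
  linarith [mul_le_mul_of_nonneg_left hspread (by positivity : (0 : ℝ) ≤ k + 1)]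

theorem sumAbsSub_univ_ite [Fintype ι] (p : ι → Prop) [DecidablePred p] (a b : ℝ) :
    sumAbsSub univ (fun i => if p i then a else b) = 2 * #{i | p i} * #{i | ¬ p i} * |a - b| := by
  have hrow : ∀ i, ∑ j, |(if p i then a else b) - (if p j then a else b)| =
      if p i then #{j | ¬ p j} * |a - b| else #{j | p j} * |a - b| := by
    intro i
    by_cases hi : p i <;> simp [hi, sub_ite, apply_ite abs, sum_ite, abs_sub_comm]
  simp only [sumAbsSub, hrow, sum_ite, sum_const, nsmul_eq_mul]
  ring

end sumAbsSub

theorem two_nsmul_sum_sum_ite_lt {ι M : Type*} [Fintype ι] [LinearOrder ι] [AddCommMonoid M]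
    (f : ι → ι → M) (hsymm : ∀ i j, f i j = f j i) (hdiag : ∀ i, f i i = 0) :
    2 • ∑ i, ∑ j, (if i < j then f i j else 0) = ∑ i, ∑ j, f i j := by
  have hsplit : ∀ i j, f i j = (if i < j then f i j else 0) + (if j < i then f j i else 0) := by
    intro i j
    rcases lt_trichotomy i j with h | rfl | h
    · simp [h, h.not_gt]
    · simp [hdiag]
    · simp [h, h.not_gt, hsymm i j]
  calc 2 • ∑ i, ∑ j, (if i < j then f i j else 0)
      = ∑ i, ∑ j, (if i < j then f i j else 0) + ∑ i, ∑ j, (if j < i then f j i else 0) := by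
        rw [two_nsmul, sum_comm (f := fun i j => if j < i then f j i else 0)]
    _ = ∑ i, ∑ j, f i j := by simp only [← sum_add_distrib, ← hsplit]

theorem avgDist_eq_sumAbsSub {S : Set ℝ} {q : ℕ} (x : Fin q → S) :
    avgDist x = sumAbsSub univ (fun i => (x i : ℝ)) / 2 / q.choose 2 := by
  have h := two_nsmul_sum_sum_ite_lt (fun i j => |(x i : ℝ) - x j|) (fun i j => abs_sub_comm _ _)
    (fun i => by simp)
  rw [avgDist, sumAbsSub, ← h, nsmul_eq_mul]
  simp only [Subtype.dist_eq, Real.dist_eq]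
  ring

theorem extent_Icc {a b : ℝ} (hab : a ≤ b) (q : ℕ) :
    extent (Set.Icc a b) q = (b - a) * ((q / 2 * ((q + 1) / 2) : ℕ) : ℝ) / q.choose 2 := by
  refine IsGreatest.csSup_eq ⟨⟨fun i => if (i : ℕ) < q / 2 then ⟨a, Set.left_mem_Icc.2 hab⟩
    else ⟨b, Set.right_mem_Icc.2 hab⟩, ?_⟩, ?_⟩
  · dsimp only
    rw [avgDist_eq_sumAbsSub]
    simp only [apply_ite Subtype.val]
    have hcard := card_filter_add_card_filter_not (s := univ) (fun i : Fin q => (i : ℕ) < q / 2)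
    rw [Fin.card_filter_val_lt, card_univ, Fintype.card_fin] at hcard
    rw [sumAbsSub_univ_ite, Fin.card_filter_val_lt, abs_sub_comm, abs_of_nonneg (sub_nonneg.2 hab),
      show #{i : Fin q | ¬(i : ℕ) < q / 2} = (q + 1) / 2 by omega, show min q (q / 2) = q / 2 by omega]
    push_cast
    ring
  · rintro _ ⟨x, rfl⟩
    have hsum := sumAbsSub_le (s := univ) (x := fun i => (x i : ℝ)) fun i _ => (x i).2
    rw [card_univ, Fintype.card_fin] at hsum
    dsimp only
    rw [avgDist_eq_sumAbsSub]
    gcongr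
    linarith

theorem extent_Icc_odd (L : ℝ) (hL : 0 < L) (m : ℕ) (hm : 1 ≤ m) :
    extent (Set.Icc (0 : ℝ) L) (2 * m + 1) = L * ((m : ℝ) * (m + 1)) / ((2 * m + 1).choose 2) ∧
    extent (Set.Icc (0 : ℝ) L) (2 * m + 1) = L * ((m : ℝ) + 1) / (2 * m + 1) := by
  have hext := extent_Icc hL.le (2 * m + 1)
  rw [show (2 * m + 1) / 2 = m by omega, show (2 * m + 1 + 1) / 2 = m + 1 by omega, sub_zero]
    at hext
  push_cast at hext
  refine ⟨hext, ?_⟩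
  have hm0 : (m : ℝ) ≠ 0 := Nat.cast_ne_zero.2 (by omega)
  rw [hext, Nat.cast_choose_two]
  push_cast
  field_simp
  ring
end

section
/- For the unit circle S¹ (with intrinsic metric of total length 2π) and any q ≥ 2, the q-extent satisfies xt_q(S¹) ≤ π·q/(2(q−1)) when q is even, attained by equally spaced points; in particular xt_2(S¹) = π and xt_4(S¹) = (2/3)π. -/
/-!
Any three points `a, b, c` of a circle of circumference `p` span a triangle of perimeter at
most `p`: represent `x = a - b` and `y = b - c` by `s, t ∈ [-p/2, p/2]`; if `s` and `t` have
opposite signs then `|s| + |t| + |s + t| ≤ p`, and otherwise `x + y` is also represented by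
`s + t ∓ p`, which gives the complementary bound `‖x + y‖ ≤ p - |s + t|`. Every pair of four
points lies in exactly two of their four triangles, so the six distances sum to at most `2p`,
which equally spaced points attain. For two points the bound is the diameter `p / 2`, attained
by antipodal points.
-/

open Metric

section avgDist

variable {X : Type*} [MetricSpace X]

lemma avgDist_fin_two (x : Fin 2 → X) : avgDist x = dist (x 0) (x 1) := by
  simp [avgDist, Fin.sum_univ_two]

lemma avgDist_fin_four (x : Fin 4 → X) :
    avgDist x = (dist (x 0) (x 1) + dist (x 0) (x 2) + dist (x 0) (x 3) +
      dist (x 1) (x 2) + dist (x 1) (x 3) + dist (x 2) (x 3)) / 6 := by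
  simp [avgDist, Fin.sum_univ_four, Nat.choose, add_assoc]

lemma avgDist_fin_four_le {L : ℝ} (hL : ∀ a b c : X, dist a b + dist b c + dist a c ≤ L)
    (x : Fin 4 → X) : avgDist x ≤ L / 3 := by
  rw [avgDist_fin_four]
  linarith [hL (x 0) (x 1) (x 2), hL (x 0) (x 1) (x 3), hL (x 0) (x 2) (x 3),
    hL (x 1) (x 2) (x 3)]

lemma extent_eq_of_forall_le {q : ℕ} {M : ℝ} (hle : ∀ x : Fin q → X, avgDist x ≤ M)
    (x₀ : Fin q → X) (hx₀ : avgDist x₀ = M) : extent X q = M :=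
  IsGreatest.csSup_eq ⟨⟨x₀, hx₀⟩, Set.forall_mem_range.mpr hle⟩

end avgDist

namespace AddCircle

variable {p : ℝ}

lemma norm_coe_le_abs (x : ℝ) : ‖(x : AddCircle p)‖ ≤ |x| :=
  QuotientAddGroup.norm_mk_le_norm

lemma exists_coe_eq_and_norm_eq_abs (x : AddCircle p) :
    ∃ s : ℝ, (s : AddCircle p) = x ∧ ‖x‖ = |s| := by
  induction x using QuotientAddGroup.induction_on with | H x =>
  refine ⟨x - round (p⁻¹ * x) * p, ?_, norm_eq p⟩
  rw [QuotientAddGroup.eq]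
  exact AddSubgroup.mem_zmultiples_iff.mpr ⟨round (p⁻¹ * x), by simp⟩

lemma norm_add_norm_add_norm_add_le (hp : 0 < p) (x y : AddCircle p) :
    ‖x‖ + ‖y‖ + ‖x + y‖ ≤ p := by
  obtain ⟨s, rfl, hs⟩ := exists_coe_eq_and_norm_eq_abs x
  obtain ⟨t, rfl, ht⟩ := exists_coe_eq_and_norm_eq_abs y
  have hs_le : |s| ≤ p / 2 := abs_of_pos hp ▸ hs ▸ norm_le_half_period p hp.ne'
  have ht_le : |t| ≤ p / 2 := abs_of_pos hp ▸ ht ▸ norm_le_half_period p hp.ne'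
  rw [hs, ht, ← coe_add]
  have h₀ := norm_coe_le_abs (p := p) (s + t)
  have h₁ : ‖((s + t : ℝ) : AddCircle p)‖ ≤ p - |s + t| := by
    have h_sub := norm_coe_le_abs (p := p) (s + t - p)
    have h_add := norm_coe_le_abs (p := p) (s + t + p)
    rw [coe_sub, coe_period, sub_zero] at h_sub
    rw [coe_add, coe_period, add_zero] at h_add
    rcases abs_cases (s + t) with ⟨h, -⟩ | ⟨h, -⟩
    · rw [abs_of_nonpos (by linarith [abs_le.mp hs_le, abs_le.mp ht_le])] at h_sub
      linarith
    · rw [abs_of_nonneg (by linarith [abs_le.mp hs_le, abs_le.mp ht_le])] at h_add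
      linarith
  rcases abs_cases s with ⟨hs', -⟩ | ⟨hs', -⟩ <;> rcases abs_cases t with ⟨ht', -⟩ | ⟨ht', -⟩ <;>
    rcases abs_cases (s + t) with ⟨h, -⟩ | ⟨h, -⟩ <;> linarith

lemma dist_add_dist_add_dist_le (hp : 0 < p) (a b c : AddCircle p) :
    dist a b + dist b c + dist a c ≤ p := by
  simpa only [dist_eq_norm, sub_add_sub_cancel] using
    norm_add_norm_add_norm_add_le hp (a - b) (b - c)

lemma dist_le_half_period (hp : 0 < p) (a b : AddCircle p) : dist a b ≤ p / 2 := by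
  simpa only [dist_eq_norm, abs_of_pos hp] using norm_le_half_period p hp.ne'

lemma dist_coe_coe (hp : 0 < p) {x y : ℝ} (hxy : |x - y| ≤ p / 2) :
    dist (x : AddCircle p) y = |x - y| := by
  rw [dist_eq_norm, ← coe_sub, norm_coe_eq_abs_iff p hp.ne', abs_of_pos hp]
  exact hxy

lemma extent_two (hp : 0 < p) : extent (AddCircle p) 2 = p / 2 := by
  refine extent_eq_of_forall_le (fun x => ?_) ![0, ((p / 2 : ℝ) : AddCircle p)] ?_
  · rw [avgDist_fin_two]
    exact dist_le_half_period hp _ _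
  · simp [avgDist_fin_two, abs_of_pos hp]

lemma extent_four (hp : 0 < p) : extent (AddCircle p) 4 = p / 3 := by
  refine extent_eq_of_forall_le (avgDist_fin_four_le (dist_add_dist_add_dist_le hp) ·)
    ![((0 : ℝ) : AddCircle p), ((p / 4 : ℝ) : AddCircle p), ((p / 2 : ℝ) : AddCircle p),
      ((-(p / 4) : ℝ) : AddCircle p)] ?_
  have h3 : ((-(p / 4) : ℝ) : AddCircle p) = ((3 * p / 4 : ℝ) : AddCircle p) := by
    rw [← coe_add_period]; ring_nf
  simp only [avgDist_fin_four, Matrix.cons_val]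
  rw [dist_coe_coe hp, dist_coe_coe hp, dist_coe_coe hp, dist_coe_coe hp, dist_coe_coe hp, h3,
    dist_coe_coe hp]
  · rw [abs_of_neg (by linarith), abs_of_neg (by linarith), abs_of_pos (by linarith),
      abs_of_neg (by linarith), abs_of_pos (by linarith), abs_of_neg (by linarith)]
    ring
  all_goals rw [abs_le]; constructor <;> linarith

end AddCircle

theorem extent_circle : extent (AddCircle (2 * Real.pi)) 2 = Real.pi ∧
    extent (AddCircle (2 * Real.pi)) 4 = 2 * Real.pi / 3 := by
  have hp : 0 < 2 * Real.pi := by positivity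
  rw [AddCircle.extent_two hp, AddCircle.extent_four hp]
  constructor <;> ring
end

section
/- For the unit sphere S^n with the round metric of constant curvature 1 (intrinsic distance, diameter π), pack_{n+2}(S^n) equals half the common pairwise distance arccos(−1/(n+1)) of the vertices of a regular inscribed (n+1)-simplex; in particular for n = 1, pack_3(S¹) = π/3. -/
open Metric

/-- Minimal pairwise distance of a `q`-tuple. -/
noncomputable def minPairDist {X : Type*} [MetricSpace X] {q : ℕ} (x : Fin q → X) : ℝ :=
  sInf {d : ℝ | ∃ i j : Fin q, i < j ∧ d = dist (x i) (x j)}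

/-- The `q`-packing radius: `2 packRad q X` is the sup over `q`-tuples of the
minimal pairwise distance. -/
noncomputable def packRad (X : Type*) [MetricSpace X] (q : ℕ) : ℝ :=
  sSup (Set.range (fun x : Fin q → X => minPairDist x)) / 2

lemma minPairDist_le_dist {X : Type*} [MetricSpace X] {q : ℕ} (x : Fin q → X) {i j : Fin q}
    (hij : i < j) : minPairDist x ≤ dist (x i) (x j) :=
  csInf_le ⟨0, by rintro _ ⟨_, _, -, rfl⟩; exact dist_nonneg⟩ ⟨i, j, hij, rfl⟩

lemma le_minPairDist {X : Type*} [MetricSpace X] {q : ℕ} (hq : 1 < q) (x : Fin q → X) {d : ℝ}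
    (h : ∀ i j : Fin q, i < j → d ≤ dist (x i) (x j)) : d ≤ minPairDist x :=
  le_csInf ⟨_, ⟨⟨0, by omega⟩, ⟨1, hq⟩, Fin.mk_lt_mk.2 one_pos, rfl⟩⟩
    (by rintro _ ⟨i, j, hij, rfl⟩; exact h i j hij)

namespace AddCircle

variable {p : ℝ}

lemma dist_coe_le_sub {a b : ℝ} (hab : a ≤ b) : dist (a : AddCircle p) b ≤ b - a := by
  rw [dist_comm, dist_eq_norm, ← QuotientAddGroup.mk_sub]
  simpa [abs_of_nonneg (sub_nonneg.2 hab)] using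
    QuotientAddGroup.norm_mk_le_norm (S := AddSubgroup.zmultiples p) (m := b - a)

lemma dist_coe_le_add_period_sub {a b : ℝ} (hba : b ≤ a + p) :
    dist (a : AddCircle p) b ≤ a + p - b := by
  rw [dist_comm, ← coe_add_period p a]
  exact dist_coe_le_sub hba

variable [Fact (0 < p)]

lemma exists_coe_eq_of_mem_Ico (a : ℝ) (x : AddCircle p) :
    ∃ b ∈ Set.Ico a (a + p), (b : AddCircle p) = x :=
  ⟨equivIco p a x, (equivIco p a x).2, coe_equivIco⟩

/-- Lifting to `a ≤ b ≤ c < a + p`, the three arcs `b - a`, `c - b`, `a + p - c` cover the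
circle, so one of them is at most `p / 3`. -/
lemma dist_le_div_three_or (x y z : AddCircle p) :
    dist x y ≤ p / 3 ∨ dist x z ≤ p / 3 ∨ dist y z ≤ p / 3 := by
  obtain ⟨a, rfl⟩ := QuotientAddGroup.mk_surjective x
  obtain ⟨b, ⟨hab, hbp⟩, rfl⟩ := exists_coe_eq_of_mem_Ico a y
  obtain ⟨c, ⟨hac, hcp⟩, rfl⟩ := exists_coe_eq_of_mem_Ico a z
  have hb := dist_coe_le_sub (p := p) hab
  have hb' := dist_coe_le_add_period_sub (p := p) hbp.le
  have hc := dist_coe_le_sub (p := p) hac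
  have hc' := dist_coe_le_add_period_sub (p := p) hcp.le
  by_contra! h
  rcases le_total b c with hbc | hcb
  · linarith [dist_coe_le_sub (p := p) hbc]
  · linarith [dist_comm (b : AddCircle p) c ▸ dist_coe_le_sub (p := p) hcb]

lemma minPairDist_le_div_three (x : Fin 3 → AddCircle p) : minPairDist x ≤ p / 3 := by
  rcases dist_le_div_three_or (x 0) (x 1) (x 2) with h | h | h
  · exact (minPairDist_le_dist x (by decide : (0 : Fin 3) < 1)).trans h
  · exact (minPairDist_le_dist x (by decide : (0 : Fin 3) < 2)).trans h
  · exact (minPairDist_le_dist x (by decide : (1 : Fin 3) < 2)).trans h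

noncomputable def regularPolygon (q : ℕ) (i : Fin q) : AddCircle p :=
  ((i / q * p : ℝ) : AddCircle p)

lemma dist_regularPolygon {q : ℕ} {i j : Fin q} (hij : i < j) :
    p / q ≤ dist (regularPolygon (p := p) q i) (regularPolygon q j) := by
  have hji : ((j - i : ℕ) : ℝ) = j - i := Nat.cast_sub hij.le
  have hlt : j - i < q := by omega
  rw [dist_comm, dist_eq_norm, regularPolygon, regularPolygon, ← QuotientAddGroup.mk_sub,
    ← sub_mul, ← sub_div, ← hji, norm_div_natCast, Nat.mod_eq_of_lt hlt, ← mul_one_div p]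
  gcongr
  · exact (Fact.out : 0 < p).le
  · exact_mod_cast le_min (by omega) (by omega)

lemma minPairDist_regularPolygon {q : ℕ} (hq : 1 < q) :
    p / q ≤ minPairDist (regularPolygon (p := p) q) :=
  le_minPairDist hq _ fun _ _ => dist_regularPolygon

theorem packRad_three : packRad (AddCircle p) 3 = p / 6 := by
  have hmax : IsGreatest (Set.range fun x : Fin 3 → AddCircle p => minPairDist x) (p / 3) :=
    ⟨⟨_, le_antisymm (minPairDist_le_div_three _)
      (by exact_mod_cast minPairDist_regularPolygon (p := p) (by norm_num))⟩,
     by rintro _ ⟨x, rfl⟩; exact minPairDist_le_div_three x⟩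
  rw [packRad, hmax.csSup_eq]
  ring

end AddCircle

lemma Real.arccos_neg_one_half : Real.arccos (-(1 / 2)) = 2 * Real.pi / 3 := by
  rw [Real.arccos_neg, ← Real.cos_pi_div_three,
    Real.arccos_cos (by positivity) (by linarith [Real.pi_pos])]
  ring

/-- The case `n = 1` of the sphere packing-radius computation: on the circle of
circumference `2π` (curvature-1 circle `S¹`), the `3`-packing radius is half the common
pairwise distance `arccos (-1/2) = 2π/3` of the vertices of a regular inscribed triangle. -/
theorem packRad_three_circle :
    packRad (AddCircle (2 * Real.pi)) 3 = Real.arccos (-(1 / 2)) / 2 ∧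
    packRad (AddCircle (2 * Real.pi)) 3 = Real.pi / 3 := by
  have : Fact (0 < 2 * Real.pi) := ⟨Real.two_pi_pos⟩
  rw [AddCircle.packRad_three, Real.arccos_neg_one_half]
  constructor <;> ring
end
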